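/- arXiv:1505.00204 — 6 statements merged into one kernel-verified Lean document; each statement's English description precedes it below -/
import Mathlib

section
/- Under the intersection-representation characterization of competition graphs of 3-partial orders, if a graph G contains an induced path x, u, v, w of length three, then the triangles assigned to u and v are crossing: A(u) ∩ A(v) ≠ ∅, A(u) \ A(v) ≠ ∅, and A(v) \ A(u) ≠ ∅. -/
/-!
Containment of representing sets transfers neighbourhoods: if `A u ⊆ A v`, a closed set witnessing
an edge `x u` also witnesses `x v`. Hence `A u ⊆ A v` would make `x` adjacent to `v`, and
`A v ⊆ A u` would make `w` adjacent to `u`. The intersection is nonempty because the nonempty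
closure witnessing the edge `u v` lies inside it.
-/

section IntersectionRepresentation

variable {V X : Type*} [TopologicalSpace X] {G : SimpleGraph V} {A : V → Set X}

theorem inter_nonempty_of_adj (hne : ∀ x : V, (closure (A x)).Nonempty)
    (hadj : ∀ u v : V, u ≠ v → (G.Adj u v ↔ ∃ a : V, closure (A a) ⊆ A u ∩ A v))
    {u v : V} (huv : G.Adj u v) : (A u ∩ A v).Nonempty := by
  obtain ⟨a, ha⟩ := (hadj u v huv.ne).mp huv
  exact (hne a).mono ha

theorem adj_of_adj_of_subset
    (hadj : ∀ u v : V, u ≠ v → (G.Adj u v ↔ ∃ a : V, closure (A a) ⊆ A u ∩ A v))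
    {x u v : V} (hsub : A u ⊆ A v) (hxu : G.Adj x u) (hxv : x ≠ v) : G.Adj x v := by
  obtain ⟨a, ha⟩ := (hadj x u hxu.ne).mp hxu
  exact (hadj x v hxv).mpr ⟨a, ha.trans (Set.inter_subset_inter_right _ hsub)⟩

theorem diff_nonempty_of_adj_of_not_adj
    (hadj : ∀ u v : V, u ≠ v → (G.Adj u v ↔ ∃ a : V, closure (A a) ⊆ A u ∩ A v))
    {x u v : V} (hxu : G.Adj x u) (hxv : ¬ G.Adj x v) (hxv' : x ≠ v) :
    (A u \ A v).Nonempty := by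
  rw [Set.sdiff_nonempty]
  exact fun hsub => hxv (adj_of_adj_of_subset hadj hsub hxu hxv')

end IntersectionRepresentation

theorem crossing_of_induced_path_general {V : Type*} (G : SimpleGraph V)
    (A : V → Set (Fin 3 → ℝ))
    (hne : ∀ x : V, (closure (A x)).Nonempty)
    (hadj : ∀ u v : V, u ≠ v → (G.Adj u v ↔ ∃ a : V, closure (A a) ⊆ A u ∩ A v))
    (x u v w : V) (hxv' : x ≠ v) (huw' : u ≠ w)
    (hxu : G.Adj x u) (huv : G.Adj u v) (hvw : G.Adj v w)
    (hxv : ¬ G.Adj x v) (huw : ¬ G.Adj u w) :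
    (A u ∩ A v).Nonempty ∧ (A u \ A v).Nonempty ∧ (A v \ A u).Nonempty :=
  ⟨inter_nonempty_of_adj hne hadj huv,
    diff_nonempty_of_adj_of_not_adj hadj hxu hxv hxv',
    diff_nonempty_of_adj_of_not_adj hadj hvw.symm (fun h => huw h.symm) huw'.symm⟩

/-- Lemma 2.2: for an induced path `x u v w` of length three in a graph
represented as in Theorem 2.1, the sets assigned to `u` and `v` are crossing. -/
theorem crossing_of_induced_path {V : Type*} [Fintype V] (G : SimpleGraph V)
    (A : V → Set (Fin 3 → ℝ))
    (hopen : ∀ x : V, IsOpen (A x))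
    (hne : ∀ x : V, (closure (A x)).Nonempty)
    (hadj : ∀ u v : V, u ≠ v → (G.Adj u v ↔ ∃ a : V, closure (A a) ⊆ A u ∩ A v))
    (x u v w : V) (hxv' : x ≠ v) (hxw' : x ≠ w) (huw' : u ≠ w)
    (hxu : G.Adj x u) (huv : G.Adj u v) (hvw : G.Adj v w)
    (hxv : ¬ G.Adj x v) (hxw : ¬ G.Adj x w) (huw : ¬ G.Adj u w) :
    (A u ∩ A v).Nonempty ∧ (A u \ A v).Nonempty ∧ (A v \ A u).Nonempty :=
  crossing_of_induced_path_general G A hne hadj x u v w hxv' huw' hxu huv hvw hxv huw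
end

section
/- A graph is a block graph (every maximal 2-connected subgraph is complete) if and only if it is chordal and contains no induced diamond (K₄ minus an edge). -/
/-- A graph is chordal if every cycle of length at least four has a chord. -/
def IsChordal {V : Type*} (G : SimpleGraph V) : Prop :=
  ∀ (u : V) (c : G.Walk u u), c.IsCycle → 4 ≤ c.length →
    ∃ a b : V, a ∈ c.support ∧ b ∈ c.support ∧ G.Adj a b ∧ s(a, b) ∉ c.edges

/-- The diamond graph: `K₄` minus one edge. -/
def diamondGraph : SimpleGraph (Fin 4) :=
  (⊤ : SimpleGraph (Fin 4)).deleteEdges {s(0, 1)}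

/-- `S` induces a 2-connected subgraph: at least three vertices, connected,
and the removal of any vertex keeps it connected. -/
def IsTwoConnSet {V : Type*} (G : SimpleGraph V) (S : Set V) : Prop :=
  3 ≤ S.ncard ∧ (G.induce S).Connected ∧
    ∀ v ∈ S, (G.induce (S \ {v})).Connected

open SimpleGraph Walk

section Aux

variable {V : Type*} {G : SimpleGraph V}

/-- From connectivity of an induced subgraph, extract a walk in `G` staying in `S`. -/
lemma exists_walk_of_induce_connected {S : Set V} (h : (G.induce S).Connected)
    {u v : V} (hu : u ∈ S) (hv : v ∈ S) :
    ∃ p : G.Walk u v, ∀ x ∈ p.support, x ∈ S := by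
  rw [SimpleGraph.connected_induce_iff,
    SimpleGraph.Subgraph.connected_iff_forall_exists_walk_subgraph] at h
  obtain ⟨p, hp⟩ := h.2 (u := u) (v := v) (by simpa) (by simpa)
  refine ⟨p, fun x hx => ?_⟩
  have := hp.1 (by rw [Walk.verts_toSubgraph]; exact hx)
  simpa using this

/-- Existence of a minimum-length walk within `S`, which is moreover a path. -/
lemma exists_min_walk {S : Set V} {u v : V}
    (h : ∃ p : G.Walk u v, ∀ x ∈ p.support, x ∈ S) :
    ∃ p : G.Walk u v, (∀ x ∈ p.support, x ∈ S) ∧ p.IsPath ∧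
      ∀ q : G.Walk u v, (∀ x ∈ q.support, x ∈ S) → p.length ≤ q.length := by
  classical
  set L : Set ℕ := {n | ∃ p : G.Walk u v, (∀ x ∈ p.support, x ∈ S) ∧ p.length = n} with hL
  have hLne : L.Nonempty := by
    obtain ⟨p, hp⟩ := h
    exact ⟨p.length, p, hp, rfl⟩
  obtain ⟨p, hpS, hplen⟩ := Nat.sInf_mem hLne
  have hmin : ∀ q : G.Walk u v, (∀ x ∈ q.support, x ∈ S) → p.length ≤ q.length := by
    intro q hq
    rw [hplen]
    exact Nat.sInf_le ⟨q, hq, rfl⟩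
  refine ⟨p.bypass, fun x hx => hpS x (p.support_bypass_subset hx), p.bypass_isPath, ?_⟩
  intro q hq
  exact le_trans p.length_bypass_le (hmin q hq)

/-- A walk of length one from `a` to `b` contains the edge `s(a,b)`. -/
lemma edge_mem_of_length_one {a b : V} {t : G.Walk a b} (h : t.length = 1) :
    s(a, b) ∈ t.edges := by
  match t with
  | .nil => simp at h
  | .cons h' .nil => simp
  | .cons _ (.cons _ _) => simp [Walk.length_cons] at h

/-- A walk of length zero has equal endpoints. -/
lemma eq_of_length_zero {a b : V} {t : G.Walk a b} (h : t.length = 0) : a = b := by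
  match t with
  | .nil => rfl
  | .cons _ _ => simp [Walk.length_cons] at h

/-- A minimum-length walk within `S` has no chords: any edge of `G` joining two
of its support vertices is an edge of the walk. -/
lemma chord_mem_edges_of_min {S : Set V} {u v : V} {p : G.Walk u v}
    (hS : ∀ x ∈ p.support, x ∈ S)
    (hmin : ∀ q : G.Walk u v, (∀ x ∈ q.support, x ∈ S) → p.length ≤ q.length)
    {a b : V} (ha : a ∈ p.support) (hb : b ∈ p.support) (hab : G.Adj a b) :
    s(a, b) ∈ p.edges := by
  classical
  by_contra hne
  have hspec := p.take_spec ha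
  by_cases hb2 : b ∈ (p.dropUntil a ha).support
  · -- `a` comes before `b` along `p`
    have hspec2 := (p.dropUntil a ha).take_spec hb2
    set r : G.Walk u v :=
      (p.takeUntil a ha).append (Walk.cons hab ((p.dropUntil a ha).dropUntil b hb2)) with hr
    have hrS : ∀ x ∈ r.support, x ∈ S := by
      intro x hx
      rw [hr, Walk.mem_support_append_iff] at hx
      rcases hx with hx | hx
      · exact hS x (p.support_takeUntil_subset ha hx)
      · rw [Walk.support_cons, List.mem_cons] at hx
        rcases hx with rfl | hx
        · exact hS x ha
        · exact hS x (p.support_dropUntil_subset ha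
            ((p.dropUntil a ha).support_dropUntil_subset hb2 hx))
    have hlen := hmin r hrS
    have h1 : (p.takeUntil a ha).length + (p.dropUntil a ha).length = p.length := by
      conv_rhs => rw [← hspec]
      exact (Walk.length_append _ _).symm
    have h2 : ((p.dropUntil a ha).takeUntil b hb2).length
        + ((p.dropUntil a ha).dropUntil b hb2).length = (p.dropUntil a ha).length := by
      conv_rhs => rw [← hspec2]
      exact (Walk.length_append _ _).symm
    have hrlen : r.length = (p.takeUntil a ha).length
        + (((p.dropUntil a ha).dropUntil b hb2).length + 1) := by
      rw [hr, Walk.length_append, Walk.length_cons]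
    have h0 : ((p.dropUntil a ha).takeUntil b hb2).length ≠ 0 :=
      fun h0 => hab.ne (eq_of_length_zero h0)
    have h1' : ((p.dropUntil a ha).takeUntil b hb2).length ≠ 1 := by
      intro h1'
      exact hne (p.edges_dropUntil_subset ha
        ((p.dropUntil a ha).edges_takeUntil_subset hb2 (edge_mem_of_length_one h1')))
    omega
  · -- `b` comes before `a` along `p`
    have hbq1 : b ∈ (p.takeUntil a ha).support := by
      rw [← hspec, Walk.mem_support_append_iff] at hb
      tauto
    have hspec2 := (p.takeUntil a ha).take_spec hbq1
    set r : G.Walk u v :=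
      ((p.takeUntil a ha).takeUntil b hbq1).append
        (Walk.cons hab.symm (p.dropUntil a ha)) with hr
    have hrS : ∀ x ∈ r.support, x ∈ S := by
      intro x hx
      rw [hr, Walk.mem_support_append_iff] at hx
      rcases hx with hx | hx
      · exact hS x (p.support_takeUntil_subset ha
          ((p.takeUntil a ha).support_takeUntil_subset hbq1 hx))
      · rw [Walk.support_cons, List.mem_cons] at hx
        rcases hx with rfl | hx
        · exact hS x hb
        · exact hS x (p.support_dropUntil_subset ha hx)
    have hlen := hmin r hrS
    have h1 : (p.takeUntil a ha).length + (p.dropUntil a ha).length = p.length := by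
      conv_rhs => rw [← hspec]
      exact (Walk.length_append _ _).symm
    have h2 : ((p.takeUntil a ha).takeUntil b hbq1).length
        + ((p.takeUntil a ha).dropUntil b hbq1).length = (p.takeUntil a ha).length := by
      conv_rhs => rw [← hspec2]
      exact (Walk.length_append _ _).symm
    have hrlen : r.length = ((p.takeUntil a ha).takeUntil b hbq1).length
        + ((p.dropUntil a ha).length + 1) := by
      rw [hr, Walk.length_append, Walk.length_cons]
    have h0 : ((p.takeUntil a ha).dropUntil b hbq1).length ≠ 0 :=
      fun h0 => hab.ne (eq_of_length_zero h0).symm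
    have h1' : ((p.takeUntil a ha).dropUntil b hbq1).length ≠ 1 := by
      intro h1'
      have := edge_mem_of_length_one h1'
      rw [Sym2.eq_swap] at this
      exact hne (p.edges_takeUntil_subset ha
        ((p.takeUntil a ha).edges_dropUntil_subset hbq1 this))
    omega

/-- In a path of length at least two, the endpoints are not joined by an edge
of the path. -/
lemma start_end_not_mem_edges {x u : V} {q : G.Walk x u} (hq : q.IsPath)
    (hlen : 2 ≤ q.length) : s(x, u) ∉ q.edges := by
  cases q with
  | nil => simp
  | @cons _ w _ h q' =>
    intro hmem
    rw [Walk.edges_cons, List.mem_cons] at hmem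
    rcases hmem with hmem | hmem
    · rw [Sym2.eq_iff] at hmem
      rcases hmem with ⟨-, rfl⟩ | ⟨rfl, rfl⟩
      · rw [Walk.cons_isPath_iff, Walk.isPath_iff_eq_nil] at hq
        simp [hq.1] at hlen
      · exact h.ne rfl
    · have := q'.fst_mem_support_of_mem_edges hmem
      rw [Walk.cons_isPath_iff] at hq
      exact hq.2 this

/-- A hub vertex adjacent to everything else makes an induced subgraph connected. -/
lemma connected_induce_of_hub {S : Set V} (c : V) (hc : c ∈ S)
    (h : ∀ x ∈ S, x = c ∨ G.Adj c x) : (G.induce S).Connected := by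
  rw [SimpleGraph.connected_iff_exists_forall_reachable]
  refine ⟨⟨c, hc⟩, ?_⟩
  rintro ⟨x, hx⟩
  rcases h x hx with rfl | hadj
  · exact Reachable.refl _
  · exact (SimpleGraph.Adj.reachable (by simpa using hadj : (G.induce S).Adj ⟨c, hc⟩ ⟨x, hx⟩))

/-- Any 2-connected set is contained in a maximal one. -/
lemma exists_maximal_twoConn [Fintype V] {S : Set V} (hS : IsTwoConnSet G S) :
    ∃ T, IsTwoConnSet G T ∧ S ⊆ T ∧
      ∀ T', IsTwoConnSet G T' → T ⊆ T' → T' = T := by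
  classical
  obtain ⟨T, ⟨hT, hST⟩, hmax⟩ := Set.Finite.exists_maximalFor id
    {T | IsTwoConnSet G T ∧ S ⊆ T} (Set.toFinite _) ⟨S, hS, subset_rfl⟩
  exact ⟨T, hT, hST, fun T' hT' hTT' => Set.Subset.antisymm (hmax ⟨hT', hST.trans hTT'⟩ hTT') hTT'⟩

/-- Key lemma: if `m` is adjacent to both endpoints of a chord-free path `q`
avoiding `m`, then (in a chordal graph) `m` is adjacent to every vertex of `q`. -/
lemma adj_all_of_chordfree (hch : IsChordal G) (m : V) :
    ∀ n (a b : V) (q : G.Walk a b), q.length = n → 1 ≤ q.length → q.IsPath →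
      m ∉ q.support → G.Adj m a → G.Adj m b →
      (∀ x ∈ q.support, ∀ y ∈ q.support, G.Adj x y → s(x, y) ∈ q.edges) →
      ∀ x ∈ q.support, G.Adj m x := by
  classical
  intro n
  induction n using Nat.strong_induction_on with
  | _ n ih =>
    intro a b q hqn hq1 hqp hm hma hmb hcf x hx
    by_cases hn2 : q.length < 2
    · -- base case : `q` is a single edge
      cases q with
      | nil => simp at hq1
      | cons h q' =>
        cases q' with
        | nil =>
          simp only [Walk.support_cons, Walk.support_nil, List.mem_cons,
            List.mem_singleton, List.not_mem_nil, or_false] at hx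
          rcases hx with rfl | rfl
          · exact hma
          · exact hmb
        | cons h' q'' => simp only [Walk.length_cons] at hn2; omega
    · push_neg at hn2
      have hab : a ≠ b := by
        rintro rfl
        rw [Walk.isPath_iff_eq_nil] at hqp
        simp [hqp] at hq1
      -- build the cycle m - a - ... - b - m
      have hbm : G.Adj b m := hmb.symm
      set C : G.Walk m m := Walk.cons hma (q.concat hbm) with hC
      have hconcat_path : (q.concat hbm).IsPath := by
        rw [Walk.isPath_def, Walk.support_concat]
        rw [List.nodup_append]
        refine ⟨hqp.support_nodup, List.nodup_singleton m, ?_⟩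
        intro z hz _ hz'
        rw [List.mem_singleton] at hz'
        subst hz'
        exact fun h => hm (h ▸ hz)
      have hCcyc : C.IsCycle := by
        rw [hC, Walk.cons_isCycle_iff]
        refine ⟨hconcat_path, ?_⟩
        rw [Walk.edges_concat, List.concat_eq_append, List.mem_append]
        rintro (hmem | hmem)
        · exact hm (q.fst_mem_support_of_mem_edges hmem)
        · rw [List.mem_singleton, Sym2.eq_iff] at hmem
          rcases hmem with ⟨rfl, -⟩ | ⟨-, rfl⟩
          · exact hmb.ne rfl
          · exact hab rfl
      have hClen : C.length = q.length + 2 := by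
        rw [hC, Walk.length_cons, Walk.length_concat]
      have hCsup : ∀ z, z ∈ C.support ↔ z = m ∨ z ∈ q.support := by
        intro z
        rw [hC, Walk.support_cons, List.mem_cons, Walk.support_concat,
          List.mem_append, List.mem_singleton]
        tauto
      have hCedge_a : s(m, a) ∈ C.edges := by
        rw [hC, Walk.edges_cons]
        exact List.mem_cons_self
      have hCedge_b : s(b, m) ∈ C.edges := by
        rw [hC, Walk.edges_cons, Walk.edges_concat]
        simp
      have hqC : ∀ e ∈ q.edges, e ∈ C.edges := by
        intro e he
        rw [hC, Walk.edges_cons, Walk.edges_concat]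
        simp [he]
      -- get a chord; it must join m to an interior vertex z of q
      obtain ⟨x', y', hx', hy', hadj', hne'⟩ := hch m C hCcyc (by omega)
      have hz : ∃ z ∈ q.support, z ≠ a ∧ z ≠ b ∧ G.Adj m z := by
        rw [hCsup] at hx' hy'
        have interior : ∀ z ∈ q.support, G.Adj m z → s(m, z) ∉ C.edges →
            ∃ z' ∈ q.support, z' ≠ a ∧ z' ≠ b ∧ G.Adj m z' := by
          intro z hzs hmz hzz
          refine ⟨z, hzs, ?_, ?_, hmz⟩
          · rintro rfl; exact hzz hCedge_a
          · rintro rfl; rw [Sym2.eq_swap] at hzz; exact hzz hCedge_b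
        rcases hx' with rfl | hx'
        · rcases hy' with rfl | hy'
          · exact absurd hadj' (G.irrefl)
          · exact interior y' hy' hadj' hne'
        · rcases hy' with rfl | hy'
          · refine interior x' hx' hadj'.symm ?_
            rw [Sym2.eq_swap]; exact hne'
          · exact absurd (hqC _ (hcf x' hx' y' hy' hadj')) hne'
      obtain ⟨z, hzs, hza, hzb, hmz⟩ := hz
      -- split q at z and recurse on both halves
      have hspec := q.take_spec hzs
      set q1 := q.takeUntil z hzs with hq1d
      set q2 := q.dropUntil z hzs with hq2d
      have hlen12 : q1.length + q2.length = q.length := by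
        conv_rhs => rw [← hspec]
        exact (Walk.length_append _ _).symm
      have hl1 : 1 ≤ q1.length := by
        rcases Nat.eq_zero_or_pos q1.length with h0 | h0
        · exact absurd (eq_of_length_zero h0) hza.symm
        · exact h0
      have hl2 : 1 ≤ q2.length := by
        rcases Nat.eq_zero_or_pos q2.length with h0 | h0
        · exact absurd (eq_of_length_zero h0) hzb
        · exact h0
      have hdisj : ∀ w, w ∈ q1.support → w ∈ q2.support → w = z := by
        intro w h1 h2
        by_contra hwz
        have hnodup := hqp.support_nodup
        rw [← hspec, Walk.support_append] at hnodup
        have h2' : w ∈ q2.support.tail := by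
          rw [q2.support_eq_cons, List.mem_cons] at h2
          tauto
        exact (List.disjoint_of_nodup_append hnodup) h1 h2'
      have hcf1 : ∀ x ∈ q1.support, ∀ y ∈ q1.support, G.Adj x y → s(x, y) ∈ q1.edges := by
        intro x hx y hy hadj
        have := hcf x (q.support_takeUntil_subset hzs hx)
          y (q.support_takeUntil_subset hzs hy) hadj
        rw [← hspec, Walk.edges_append, List.mem_append] at this
        rcases this with h | h
        · exact h
        · have hx2 := q2.fst_mem_support_of_mem_edges h
          have hy2 := q2.snd_mem_support_of_mem_edges h
          exact absurd ((hdisj x hx hx2).trans (hdisj y hy hy2).symm) hadj.ne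
      have hcf2 : ∀ x ∈ q2.support, ∀ y ∈ q2.support, G.Adj x y → s(x, y) ∈ q2.edges := by
        intro x hx y hy hadj
        have := hcf x (q.support_dropUntil_subset hzs hx)
          y (q.support_dropUntil_subset hzs hy) hadj
        rw [← hspec, Walk.edges_append, List.mem_append] at this
        rcases this with h | h
        · have hx1 := q1.fst_mem_support_of_mem_edges h
          have hy1 := q1.snd_mem_support_of_mem_edges h
          exact absurd ((hdisj x hx1 hx).trans (hdisj y hy1 hy).symm) hadj.ne
        · exact h
      have hrec1 := ih q1.length (by omega) a z q1 rfl hl1 (hqp.takeUntil hzs)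
        (fun hmem => hm (q.support_takeUntil_subset hzs hmem)) hma hmz hcf1
      have hrec2 := ih q2.length (by omega) z b q2 rfl hl2 (hqp.dropUntil hzs)
        (fun hmem => hm (q.support_dropUntil_subset hzs hmem)) hmz hmb hcf2
      rw [← hspec, Walk.mem_support_append_iff] at hx
      rcases hx with hx | hx
      · exact hrec1 x hx
      · exact hrec2 x hx

/-- Unfolding the adjacency relation of the diamond graph. -/
lemma diamond_adj_iff (i j : Fin 4) : diamondGraph.Adj i j ↔
    (i ≠ j ∧ ¬((i = 0 ∧ j = 1) ∨ (i = 1 ∧ j = 0))) := by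
  simp only [diamondGraph, SimpleGraph.deleteEdges_adj, SimpleGraph.top_adj,
    Set.mem_singleton_iff, Sym2.eq_iff]

/-- Build a diamond embedding from a path a-b-c with apex m. -/
def diamond_embedding {a b c m : V} (hab : G.Adj a b) (hbc : G.Adj b c)
    (hma : G.Adj m a) (hmb : G.Adj m b) (hmc : G.Adj m c)
    (hnac : ¬G.Adj a c) (hac : a ≠ c) : diamondGraph ↪g G := by
  refine ⟨⟨![a, c, b, m], ?_⟩, ?_⟩
  · intro i j hij
    fin_cases i <;> fin_cases j <;> simp at hij ⊢ <;>
      first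
        | exact absurd hij hac
        | exact absurd hij hac.symm
        | exact absurd hij hab.ne
        | exact absurd hij (hab.ne).symm
        | exact absurd hij hbc.ne
        | exact absurd hij (hbc.ne).symm
        | exact absurd hij hma.ne'
        | exact absurd hij (hma.ne').symm
        | exact absurd hij hmb.ne'
        | exact absurd hij (hmb.ne').symm
        | exact absurd hij hmc.ne'
        | exact absurd hij (hmc.ne').symm
  · intro i j
    fin_cases i <;> fin_cases j <;> simp [diamond_adj_iff] <;>
      first
        | exact G.irrefl
        | exact hnac
        | exact fun h => hnac h.symm
        | exact hab | exact hab.symm | exact hbc | exact hbc.symm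
        | exact hma | exact hma.symm | exact hmb | exact hmb.symm
        | exact hmc | exact hmc.symm

/-- From a walk inside `S` between two nonadjacent distinct vertices we can find
an induced path on three vertices inside `S`. -/
lemma exists_induced_P3 {S : Set V} :
    ∀ n {x y : V} (p : G.Walk x y), p.length = n → (∀ z ∈ p.support, z ∈ S) →
      ¬G.Adj x y → x ≠ y →
      ∃ a m b : V, a ∈ S ∧ m ∈ S ∧ b ∈ S ∧ G.Adj a m ∧ G.Adj m b ∧
        ¬G.Adj a b ∧ a ≠ b := by
  intro n
  induction n using Nat.strong_induction_on with
  | _ n ih =>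
    intro x y p hlen hS hnadj hne
    cases p with
    | nil => exact absurd rfl hne
    | @cons _ x1 _ h q =>
      cases q with
      | nil => exact absurd h hnadj
      | @cons _ x2 _ h2 r =>
        by_cases hxx2 : x = x2
        · subst hxx2
          exact ih r.length (by rw [← hlen]; simp only [Walk.length_cons]; omega) r rfl
            (fun z hz => hS z (by simp [Walk.support_cons]; tauto)) hnadj hne
        · by_cases hadj2 : G.Adj x x2
          · exact ih (Walk.cons hadj2 r).length
              (by rw [← hlen]; simp only [Walk.length_cons]; omega) (Walk.cons hadj2 r) rfl
              (fun z hz => hS z (by simp [Walk.support_cons] at hz ⊢; tauto))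
              hnadj hne
          · exact ⟨x, x1, x2, hS x (Walk.start_mem_support _),
              hS x1 (by simp [Walk.support_cons]),
              hS x2 (by simp [Walk.support_cons, Walk.start_mem_support]),
              h, h2, hadj2, hxx2⟩

/-- Main lemma for the reverse implication: in a chordal diamond-free graph,
every 2-connected set is a clique. -/
lemma clique_of_chordal_diamondFree (hch : IsChordal G)
    (hdf : IsEmpty (diamondGraph ↪g G)) {S : Set V} (hS : IsTwoConnSet G S) :
    G.IsClique S := by
  classical
  by_contra hclq
  simp only [SimpleGraph.isClique_iff, Set.Pairwise] at hclq
  push_neg at hclq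
  obtain ⟨x, hx, y, hy, hxy, hnadj⟩ := hclq
  obtain ⟨p0, hp0⟩ := exists_walk_of_induce_connected hS.2.1 hx hy
  obtain ⟨a, m, b, haS, hmS, hbS, ham, hmb, hnab, hab⟩ :=
    exists_induced_P3 p0.length p0 rfl hp0 hnadj hxy
  have haM : a ∈ S \ {m} := ⟨haS, by simp [ham.ne]⟩
  have hbM : b ∈ S \ {m} := ⟨hbS, by simp [hmb.ne']⟩
  obtain ⟨p1, hp1⟩ := exists_walk_of_induce_connected (hS.2.2 m hmS) haM hbM
  obtain ⟨p, hpS, hpath, hmin⟩ := exists_min_walk ⟨p1, hp1⟩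
  have hmnp : m ∉ p.support := fun hmem => (hpS m hmem).2 rfl
  have hplen2 : 2 ≤ p.length := by
    have h0 : p.length ≠ 0 := fun h0 => hab (eq_of_length_zero h0)
    have h1 : p.length ≠ 1 := by
      intro h1
      have := p.adj_getVert_succ (i := 0) (by omega)
      rw [Walk.getVert_zero] at this
      have h1' : (0 : ℕ) + 1 = p.length := by omega
      rw [h1', Walk.getVert_length] at this
      exact hnab this
    omega
  have hall : ∀ z ∈ p.support, G.Adj m z :=
    adj_all_of_chordfree hch m p.length a b p rfl (by omega) hpath hmnp
      ham.symm hmb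
      (fun x hx y hy hadj => chord_mem_edges_of_min hpS hmin hx hy hadj)
  cases p with
  | nil => simp at hplen2
  | @cons _ w1 _ h1 q =>
    cases q with
    | nil => simp at hplen2
    | @cons _ w2 _ h2 r =>
      -- p = a :: w1 :: w2 :: ...
      have hw1S : w1 ∈ (Walk.cons h1 (Walk.cons h2 r)).support := by
        simp [Walk.support_cons]
      have hw2S : w2 ∈ (Walk.cons h1 (Walk.cons h2 r)).support := by
        simp [Walk.support_cons, Walk.start_mem_support]
      have hnaw2 : ¬G.Adj a w2 := by
        intro hadj
        have hcomp := hmin (Walk.cons hadj r) (by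
          intro z hz
          simp only [Walk.support_cons, List.mem_cons] at hz ⊢
          rcases hz with rfl | hz
          · exact hpS z (by simp [Walk.support_cons])
          · exact hpS z (by simp [Walk.support_cons]; tauto))
        simp [Walk.length_cons] at hcomp
      have hnodup := hpath.support_nodup
      simp only [Walk.support_cons, List.nodup_cons, List.mem_cons] at hnodup
      have haw1 : a ≠ w1 := fun h => hnodup.1 (Or.inl h)
      have haw2 : a ≠ w2 := fun h => hnodup.1 (Or.inr (h ▸ r.start_mem_support))
      have hw1w2 : w1 ≠ w2 := h2.ne
      have hmadj1 : G.Adj m w1 := hall w1 hw1S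
      have hmadj2 : G.Adj m w2 := hall w2 hw2S
      have hma' : m ≠ a := ham.ne'
      have hmw1 : m ≠ w1 := hmadj1.ne
      have hmw2 : m ≠ w2 := hmadj2.ne
      exact hdf.false (diamond_embedding h1 h2 ham.symm hmadj1 hmadj2 hnaw2 haw2)

/-- In a closed nontrivial walk, support membership equals tail-support membership. -/
lemma mem_support_iff_mem_tail {u : V} {c : G.Walk u u} (hn : ¬c.Nil) (z : V) :
    z ∈ c.support ↔ z ∈ c.support.tail := by
  obtain ⟨w, h, q, rfl⟩ := Walk.not_nil_iff.mp hn
  rw [Walk.support_cons]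
  simp only [List.tail_cons, List.mem_cons]
  constructor
  · rintro (rfl | h')
    · exact q.end_mem_support
    · exact h'
  · exact Or.inr

/-- The support of a long cycle is a 2-connected set. -/
lemma twoConn_of_cycle {u : V} {c : G.Walk u u} (hc : c.IsCycle) (h4 : 4 ≤ c.length) :
    IsTwoConnSet G {z | z ∈ c.support} := by
  classical
  have hcnil : ¬c.Nil := by
    rw [Walk.nil_iff_length_eq]; omega
  refine ⟨?_, c.connected_induce_support, ?_⟩
  · -- at least three vertices
    cases c with
    | nil => simp at h4
    | @cons _ v1 _ h1 q0 =>
      cases q0 with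
      | nil => simp at h4
      | @cons _ x _ h2 q =>
        have hnodup : (v1 :: q.support).Nodup := by
          have := hc.support_nodup
          simpa [Walk.support_cons] using this
        have hv1q : v1 ∉ q.support := (List.nodup_cons.mp hnodup).1
        have hqnodup : q.support.Nodup := (List.nodup_cons.mp hnodup).2
        have hqpath : q.IsPath := (Walk.isPath_def _).mpr hqnodup
        have hqlen : 2 ≤ q.length := by
          simp only [Walk.length_cons] at h4; omega
        have hxu : x ≠ u := by
          rintro rfl
          rw [Walk.isPath_iff_eq_nil] at hqpath
          simp [hqpath] at hqlen
        have hv1u : v1 ≠ u := fun h => hv1q (h ▸ q.end_mem_support)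
        have hv1x : v1 ≠ x := fun h => hv1q (h ▸ q.start_mem_support)
        have hsub : ({u, v1, x} : Set V) ⊆ {z | z ∈ (Walk.cons h1 (Walk.cons h2 q)).support} := by
          intro z hz
          rcases hz with rfl | rfl | rfl
          · exact Walk.start_mem_support _
          · simp [Walk.support_cons]
          · simp [Walk.support_cons, Walk.start_mem_support]
        have h3 : ({u, v1, x} : Set V).ncard = 3 := by
          rw [Set.ncard_eq_three]
          exact ⟨u, v1, x, hv1u.symm, hxu.symm, hv1x, rfl⟩
        calc 3 = ({u, v1, x} : Set V).ncard := h3.symm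
          _ ≤ _ := Set.ncard_le_ncard hsub ((Walk.cons h1 (Walk.cons h2 q)).support.finite_toSet)
  · -- removing any vertex keeps it connected
    intro v hv
    have hv' : v ∈ c.support := hv
    have hrot := hc.rotate hv'
    have hsupeq : ∀ z, z ∈ (c.rotate v hv').support ↔ z ∈ c.support := by
      intro z
      have h2 : z ∈ (c.rotate v hv').support.tail ↔ z ∈ c.support.tail :=
        (c.support_rotate v hv').mem_iff
      rw [mem_support_iff_mem_tail hcnil, ← h2, ← mem_support_iff_mem_tail hrot.not_nil]
    have hlenrot : (c.rotate v hv').length = c.length := by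
      have h1 : (c.takeUntil v hv').length + (c.dropUntil v hv').length = c.length := by
        conv_rhs => rw [← c.take_spec hv']
        exact (Walk.length_append _ _).symm
      show ((c.dropUntil v hv').append (c.takeUntil v hv')).length = c.length
      rw [Walk.length_append]; omega
    obtain ⟨w1, hadj1, q1, hq1⟩ := Walk.not_nil_iff.mp hrot.not_nil
    have hq1sup : q1.support = (c.rotate v hv').support.tail := by
      rw [hq1, Walk.support_cons, List.tail_cons]
    have hq1nodup : q1.support.Nodup := by rw [hq1sup]; exact hrot.support_nodup
    have hq1nil : ¬q1.Nil := by
      rw [Walk.nil_iff_length_eq]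
      have : (c.rotate v hv').length = q1.length + 1 := by rw [hq1, Walk.length_cons]
      omega
    have hq1rnil : ¬q1.reverse.Nil := by
      rw [Walk.nil_iff_length_eq, Walk.length_reverse]
      rw [Walk.nil_iff_length_eq] at hq1nil
      omega
    obtain ⟨w2, hadj2, r2, hr2⟩ := Walk.not_nil_iff.mp hq1rnil
    have hrevsup : q1.support.reverse = v :: r2.support := by
      rw [← Walk.support_reverse, hr2, Walk.support_cons]
    have hvr2 : v ∉ r2.support := by
      have : q1.support.reverse.Nodup := List.nodup_reverse.mpr hq1nodup
      rw [hrevsup, List.nodup_cons] at this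
      exact this.1
    have hseteq : {z | z ∈ c.support} \ {v} = {z | z ∈ r2.support} := by
      ext z
      simp only [Set.mem_diff, Set.mem_setOf_eq, Set.mem_singleton_iff]
      have m1 : z ∈ c.support ↔ z = v ∨ z ∈ q1.support := by
        rw [← hsupeq, hq1, Walk.support_cons, List.mem_cons]
      have m2 : z ∈ q1.support ↔ z = v ∨ z ∈ r2.support := by
        rw [← List.mem_reverse, hrevsup, List.mem_cons]
      constructor
      · rintro ⟨hz, hzv⟩
        rcases m1.mp hz with rfl | hz'
        · exact absurd rfl hzv
        · rcases m2.mp hz' with rfl | hz''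
          · exact absurd rfl hzv
          · exact hz''
      · intro hz
        refine ⟨m1.mpr (Or.inr (m2.mpr (Or.inr hz))), ?_⟩
        rintro rfl
        exact hvr2 hz
    rw [hseteq]
    exact r2.connected_induce_support

/-- Forward direction: block property implies chordality. -/
lemma chordal_of_blockGraph [Fintype V]
    (hBG : ∀ S : Set V, IsTwoConnSet G S →
      (∀ T : Set V, IsTwoConnSet G T → S ⊆ T → T = S) → G.IsClique S) :
    IsChordal G := by
  classical
  intro u c hc h4
  obtain ⟨T, hT, hsubT, hmax⟩ := exists_maximal_twoConn (twoConn_of_cycle hc h4)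
  have hclq := hBG T hT hmax
  cases c with
  | nil => simp at h4
  | @cons _ v1 _ h1 q0 =>
    cases q0 with
    | nil => simp at h4
    | @cons _ x _ h2 q =>
      have hnodup : (v1 :: q.support).Nodup := by
        have := hc.support_nodup
        simpa [Walk.support_cons] using this
      have hv1q : v1 ∉ q.support := (List.nodup_cons.mp hnodup).1
      have hqnodup : q.support.Nodup := (List.nodup_cons.mp hnodup).2
      have hqpath : q.IsPath := (Walk.isPath_def _).mpr hqnodup
      have hqlen : 2 ≤ q.length := by
        simp only [Walk.length_cons] at h4; omega
      have hxu : x ≠ u := by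
        rintro rfl
        rw [Walk.isPath_iff_eq_nil] at hqpath
        simp [hqpath] at hqlen
      have hv1u : v1 ≠ u := fun h => hv1q (h ▸ q.end_mem_support)
      have hv1x : v1 ≠ x := fun h => hv1q (h ▸ q.start_mem_support)
      have hus : u ∈ (Walk.cons h1 (Walk.cons h2 q)).support :=
        Walk.start_mem_support _
      have hxs : x ∈ (Walk.cons h1 (Walk.cons h2 q)).support := by
        simp [Walk.support_cons, Walk.start_mem_support]
      refine ⟨u, x, hus, hxs, hclq (hsubT hus) (hsubT hxs) hxu.symm, ?_⟩
      simp only [Walk.edges_cons, List.mem_cons]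
      rintro (hmem | hmem | hmem)
      · rw [Sym2.eq_iff] at hmem
        rcases hmem with ⟨-, h⟩ | ⟨h, -⟩
        · exact hv1x (h.symm)
        · exact hv1u (h.symm)
      · rw [Sym2.eq_iff] at hmem
        rcases hmem with ⟨h, -⟩ | ⟨-, h⟩
        · exact hv1u (h.symm)
        · exact hv1x (h.symm)
      · rw [Sym2.eq_swap] at hmem
        exact start_end_not_mem_edges hqpath hqlen hmem

/-- Forward direction: block property implies diamond-freeness. -/
lemma diamondFree_of_blockGraph [Fintype V]
    (hBG : ∀ S : Set V, IsTwoConnSet G S →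
      (∀ T : Set V, IsTwoConnSet G T → S ⊆ T → T = S) → G.IsClique S) :
    IsEmpty (diamondGraph ↪g G) := by
  classical
  constructor
  intro f
  have hinj : Function.Injective f := f.injective
  have hS2 : IsTwoConnSet G (Set.range f) := by
    refine ⟨?_, ?_, ?_⟩
    · rw [← Set.image_univ, Set.ncard_image_of_injective _ hinj, Set.ncard_univ,
        Nat.card_eq_fintype_card, Fintype.card_fin]
      omega
    · refine connected_induce_of_hub (f 2) ⟨2, rfl⟩ ?_
      rintro x ⟨i, rfl⟩
      by_cases h2 : i = 2
      · subst h2; exact Or.inl rfl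
      · refine Or.inr (f.map_rel_iff.mpr ?_)
        rw [diamond_adj_iff]
        revert h2
        fin_cases i <;> decide
    · rintro v ⟨k, rfl⟩
      by_cases hk : k = 2
      · subst hk
        refine connected_induce_of_hub (f 3)
          ⟨⟨3, rfl⟩, fun h => (by decide : (3 : Fin 4) ≠ 2) (hinj h)⟩ ?_
        rintro x ⟨⟨i, rfl⟩, hxne⟩
        have hi2 : i ≠ 2 := fun h => hxne (by rw [h]; rfl)
        by_cases h3 : i = 3
        · subst h3; exact Or.inl rfl
        · refine Or.inr (f.map_rel_iff.mpr ?_)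
          rw [diamond_adj_iff]
          revert hi2 h3
          fin_cases i <;> decide
      · refine connected_induce_of_hub (f 2)
          ⟨⟨2, rfl⟩, fun h => hk (hinj h).symm⟩ ?_
        rintro x ⟨⟨i, rfl⟩, hxne⟩
        by_cases h2 : i = 2
        · subst h2; exact Or.inl rfl
        · refine Or.inr (f.map_rel_iff.mpr ?_)
          rw [diamond_adj_iff]
          revert h2
          fin_cases i <;> decide
  obtain ⟨T, hT, hST, hmax⟩ := exists_maximal_twoConn hS2
  have hclq := hBG T hT hmax
  have hadj : G.Adj (f 0) (f 1) :=
    hclq (hST ⟨0, rfl⟩) (hST ⟨1, rfl⟩) (fun h => (by decide : (0 : Fin 4) ≠ 1) (hinj h))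
  have := f.map_rel_iff.mp hadj
  rw [diamond_adj_iff] at this
  exact absurd this (by decide)

end Aux


/-- A graph is a block graph (every maximal 2-connected subgraph is complete)
iff it is chordal and diamond-free. -/
theorem blockGraph_iff_diamondFree_chordal {V : Type*} [Fintype V]
    (G : SimpleGraph V) :
    (∀ S : Set V, IsTwoConnSet G S →
        (∀ T : Set V, IsTwoConnSet G T → S ⊆ T → T = S) → G.IsClique S)
      ↔ (IsChordal G ∧ IsEmpty (diamondGraph ↪g G)) := by
  constructor
  · intro hBG
    exact ⟨chordal_of_blockGraph hBG, diamondFree_of_blockGraph hBG⟩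
  · rintro ⟨hch, hdf⟩ S hS _
    exact clique_of_chordal_diamondFree hch hdf hS
end

section
/- Every chordal graph with at least one vertex has a simplicial vertex, i.e., a vertex whose neighborhood is a clique. -/
/-!
Dirac's argument. Let `a` be a vertex with a non-neighbour `b`, let `C` be the component of `b`
in `G - N[a]`, and let `S` be the set of vertices outside `C` with a neighbour in `C`. Then
`S ⊆ N(a)`, and `S` is a clique: two non-adjacent `x, y ∈ S`, a chordless `x`–`y` path through `C`
and the vertex `a` would form a chordless cycle of length at least four. Since `a ∉ C ∪ S`,
induction applies to `C ∪ S`; as `S` is a clique it yields a vertex of `C` simplicial in `C ∪ S`,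
hence in `G`, because all its neighbours lie in `C ∪ S`. Doing this first for `a` and then for the
simplicial vertex found proves, by induction on the vertex set, that every non-complete chordal
graph has two non-adjacent simplicial vertices.
-/

open SimpleGraph

section

variable {V : Type*} {G : SimpleGraph V}

namespace SimpleGraph.Walk

variable [DecidableEq V]

theorem exists_length_lt_of_not_isChordless {u v : V} (p : G.Walk u v) (hp : ¬ p.IsChordless) :
    ∃ q : G.Walk u v, q.length < p.length ∧ q.support ⊆ p.support := by
  induction p with
  | nil =>
    refine absurd (isChordless_iff_forall_mem_edges.mpr ?_) hp
    intro c d hc hd hcd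
    rw [support_nil, List.mem_singleton] at hc hd
    exact absurd (hc ▸ hd ▸ hcd) (G.irrefl)
  | @cons u w v huw p ih =>
    have jump : ∀ d ∈ p.support, G.Adj u d → s(u, d) ∉ (cons huw p).edges →
        ∃ q : G.Walk u v, q.length < (cons huw p).length ∧ q.support ⊆ (cons huw p).support := by
      intro d hd hud hnot
      have hdw : d ≠ w := by rintro rfl; simp at hnot
      refine ⟨cons hud (p.dropUntil d hd), ?_, ?_⟩
      · simpa using length_dropUntil_lt_length hd hdw
      · simpa using List.Subset.trans (support_dropUntil_subset_support p hd)
          (List.subset_cons_self _ _)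
    simp only [isChordless_iff_forall_mem_edges, not_forall] at hp
    obtain ⟨c, d, hc, hd, hcd, hnot⟩ := hp
    rw [support_cons, List.mem_cons] at hc hd
    rcases hc with rfl | hc <;> rcases hd with rfl | hd
    · exact absurd hcd (G.irrefl)
    · exact jump d hd hcd hnot
    · exact jump c hc hcd.symm (Sym2.eq_swap ▸ hnot)
    · have hp : ¬ p.IsChordless := fun h =>
        hnot (List.mem_cons_of_mem _ (h.mem_edges hc hd hcd))
      obtain ⟨q, hlt, hsub⟩ := ih hp
      exact ⟨cons huw q, by simpa using hlt, List.cons_subset_cons _ hsub⟩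

theorem exists_isPath_isChordless {u v : V} (p : G.Walk u v) :
    ∃ q : G.Walk u v, q.IsPath ∧ q.IsChordless ∧ q.support ⊆ p.support := by
  induction hn : p.length using Nat.strong_induction_on generalizing p with
  | _ n ih =>
  by_cases h : p.bypass.IsChordless
  · exact ⟨p.bypass, p.bypass_isPath, h, p.support_bypass_subset_support⟩
  · obtain ⟨q, hlt, hsub⟩ := p.bypass.exists_length_lt_of_not_isChordless h
    obtain ⟨r, hr, hrc, hrs⟩ := ih q.length (hn ▸ hlt.trans_le p.length_bypass_le_length) q rfl
    exact ⟨r, hr, hrc,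
      List.Subset.trans hrs (List.Subset.trans hsub p.support_bypass_subset_support)⟩

end SimpleGraph.Walk

theorem IsChordal.not_isChordless (hG : IsChordal G) {u : V} {c : G.Walk u u} (hc : c.IsCycle)
    (hlen : 4 ≤ c.length) : ¬ c.IsChordless := fun h => by
  obtain ⟨a, b, ha, hb, hab, hnot⟩ := hG u c hc hlen
  exact hnot (h.mem_edges ha hb hab)

theorem IsChordal.adj_of_walk (hG : IsChordal G) {a x y : V} (hax : G.Adj a x) (hay : G.Adj a y)
    (hxy : x ≠ y) (p : G.Walk x y)
    (hp : ∀ z ∈ p.support, z ≠ a ∧ (G.Adj a z → z = x ∨ z = y)) : G.Adj x y := by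
  classical
  by_contra hnxy
  obtain ⟨q, hq, hqc, hqp⟩ := p.exists_isPath_isChordless
  have haq : a ∉ q.support := fun h => (hp a (hqp h)).1 rfl
  have hqlen : 2 ≤ q.length := by
    by_contra! h
    interval_cases hl : q.length
    exacts [hxy (Walk.eq_of_length_eq_zero hl), hnxy (Walk.adj_of_length_eq_one hl)]
  set c : G.Walk a a := .cons hax (q.concat hay.symm)
  have hc : c.IsCycle := by
    refine (Walk.cons_isCycle_iff _ hax).mpr ⟨hq.concat haq hay.symm, ?_⟩
    rw [Walk.edges_concat, List.concat_eq_append, List.mem_append, List.mem_singleton, not_or]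
    exact ⟨fun h => haq (q.fst_mem_support_of_mem_edges h), by grind⟩
  have hclen : 4 ≤ c.length := by
    simp only [c, Walk.length_cons, Walk.length_concat]; omega
  refine hG.not_isChordless hc hclen (Walk.isChordless_iff_forall_mem_edges.mpr ?_)
  have hmem : ∀ z ∈ c.support, z = a ∨ z ∈ q.support := fun z hz => by
    simp only [c, Walk.support_cons, Walk.support_concat, List.mem_cons, List.mem_append] at hz
    tauto
  intro u v hu hv huv
  rcases hmem u hu with rfl | huq <;> rcases hmem v hv with rfl | hvq
  · exact absurd huv (G.irrefl)
  · rcases (hp v (hqp hvq)).2 huv with rfl | rfl <;> simp [c]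
  · rcases (hp u (hqp huq)).2 huv.symm with rfl | rfl <;> simp [c]
  · simp [c, hqc.mem_edges huq hvq huv]

namespace SimpleGraph

def componentIn (G : SimpleGraph V) (T : Set V) (b : V) : Set V :=
  {z | ∃ p : G.Walk b z, ∀ t ∈ p.support, t ∈ T}

variable {T : Set V} {b : V}

theorem self_mem_componentIn (hb : b ∈ T) : b ∈ G.componentIn T b :=
  ⟨.nil, by simpa using hb⟩

theorem componentIn_subset : G.componentIn T b ⊆ T :=
  fun _ ⟨p, hp⟩ => hp _ p.end_mem_support

theorem mem_componentIn_of_adj {z w : V} (hz : z ∈ G.componentIn T b) (hzw : G.Adj z w)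
    (hw : w ∈ T) : w ∈ G.componentIn T b := by
  obtain ⟨p, hp⟩ := hz
  refine ⟨p.concat hzw, fun t ht => ?_⟩
  rw [Walk.support_concat, List.mem_append, List.mem_singleton] at ht
  rcases ht with ht | rfl
  exacts [hp t ht, hw]

theorem exists_walk_of_mem_componentIn {z w : V} (hz : z ∈ G.componentIn T b)
    (hw : w ∈ G.componentIn T b) : ∃ p : G.Walk z w, ∀ t ∈ p.support, t ∈ T := by
  obtain ⟨p, hp⟩ := hz
  obtain ⟨q, hq⟩ := hw
  refine ⟨p.reverse.append q, fun t ht => ?_⟩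
  rw [Walk.mem_support_append_iff, Walk.support_reverse, List.mem_reverse] at ht
  exact ht.elim (hp t) (hq t)

def IsSimplicialIn (G : SimpleGraph V) (W : Set V) (v : V) : Prop :=
  G.IsClique (G.neighborSet v ∩ W)

end SimpleGraph

theorem IsChordal.isClique_setOf_adj_adj_componentIn (hG : IsChordal G) {a b : V} {T : Set V}
    (hT : ∀ z ∈ T, z ≠ a ∧ ¬ G.Adj a z) :
    G.IsClique {x | G.Adj a x ∧ ∃ c ∈ G.componentIn T b, G.Adj x c} := by
  rintro x ⟨hax, cx, hcx, hxcx⟩ y ⟨hay, cy, hcy, hycy⟩ hxy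
  obtain ⟨p, hp⟩ := G.exists_walk_of_mem_componentIn hcx hcy
  refine hG.adj_of_walk hax hay hxy (.cons hxcx (p.concat hycy.symm)) fun z hz => ?_
  rw [Walk.support_cons, Walk.support_concat, List.mem_cons, List.mem_append,
    List.mem_singleton] at hz
  rcases hz with rfl | hz | rfl
  · exact ⟨hax.ne', fun _ => Or.inl rfl⟩
  · exact ⟨(hT z (hp z hz)).1, fun h => absurd h (hT z (hp z hz)).2⟩
  · exact ⟨hay.ne', fun _ => Or.inr rfl⟩

theorem IsChordal.exists_isSimplicialIn_not_adj (hG : IsChordal G) {W : Set V}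
    (ih : ∀ W' ⊂ W, G.IsClique W' ∨ ∃ u ∈ W', ∃ w ∈ W', u ≠ w ∧ ¬ G.Adj u w ∧
      G.IsSimplicialIn W' u ∧ G.IsSimplicialIn W' w)
    {a b : V} (ha : a ∈ W) (hb : b ∈ W) (hab : a ≠ b) (hnab : ¬ G.Adj a b) :
    ∃ v ∈ W, v ≠ a ∧ ¬ G.Adj a v ∧ G.IsSimplicialIn W v := by
  set T : Set V := {z | z ∈ W ∧ z ≠ a ∧ ¬ G.Adj a z}
  set C := G.componentIn T b
  set S : Set V := {x | x ∈ W ∧ x ∉ C ∧ ∃ c ∈ C, G.Adj x c}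
  have hbC : b ∈ C := self_mem_componentIn ⟨hb, hab.symm, hnab⟩
  have hCT : C ⊆ T := componentIn_subset
  have hSa : ∀ x ∈ S, G.Adj a x := by
    rintro x ⟨hxW, hxC, c, hc, hxc⟩
    by_contra hax
    have hxa : x ≠ a := by rintro rfl; exact (hCT hc).2.2 hxc
    exact hxC (mem_componentIn_of_adj hc hxc.symm ⟨hxW, hxa, hax⟩)
  have hS : G.IsClique S := by
    refine (hG.isClique_setOf_adj_adj_componentIn (b := b) (T := T) fun _ hz => hz.2).subset ?_
    exact fun x hx => ⟨hSa x hx, hx.2.2⟩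
  have hCS : C ∪ S ⊂ W := by
    refine ⟨Set.union_subset (fun z hz => (hCT hz).1) fun z hz => hz.1, fun h => ?_⟩
    rcases h ha with haC | haS
    exacts [(hCT haC).2.1 rfl, G.irrefl (hSa a haS)]
  have hN : ∀ v ∈ C, G.neighborSet v ∩ W ⊆ C ∪ S := fun v hv z ⟨hvz, hzW⟩ => by
    by_cases hzC : z ∈ C
    exacts [Or.inl hzC, Or.inr ⟨hzW, hzC, v, hv, hvz.symm⟩]
  obtain ⟨v, hvCS, hvS, hv⟩ : ∃ v ∈ C ∪ S, v ∉ S ∧ G.IsSimplicialIn (C ∪ S) v := by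
    rcases ih _ hCS with hclique | ⟨u, hu, w, hw, huw, hnuw, hus, hws⟩
    · exact ⟨b, Or.inl hbC, fun h => h.2.1 hbC, hclique.subset Set.inter_subset_right⟩
    · by_cases huS : u ∈ S
      · exact ⟨w, hw, fun hwS => hnuw (hS huS hwS huw), hws⟩
      · exact ⟨u, hu, huS, hus⟩
  have hvC : v ∈ C := hvCS.resolve_right hvS
  refine ⟨v, (hCT hvC).1, (hCT hvC).2.1, (hCT hvC).2.2, hv.subset ?_⟩
  exact fun z hz => ⟨hz.1, hN v hvC hz⟩

theorem IsChordal.isClique_or_exists_isSimplicialIn [Finite V] (hG : IsChordal G) (W : Set V) :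
    G.IsClique W ∨ ∃ u ∈ W, ∃ w ∈ W, u ≠ w ∧ ¬ G.Adj u w ∧
      G.IsSimplicialIn W u ∧ G.IsSimplicialIn W w := by
  induction W using WellFoundedLT.induction with | _ W ih =>
  refine or_iff_not_imp_left.mpr fun hW => ?_
  obtain ⟨x, hx, y, hy, hxy, hnxy⟩ : ∃ x ∈ W, ∃ y ∈ W, x ≠ y ∧ ¬ G.Adj x y := by
    simpa [IsClique, Set.Pairwise] using hW
  obtain ⟨u, hu, hux, hxu, hus⟩ := hG.exists_isSimplicialIn_not_adj ih hx hy hxy hnxy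
  obtain ⟨w, hw, hwu, huw, hws⟩ :=
    hG.exists_isSimplicialIn_not_adj ih hu hx hux fun h => hxu h.symm
  exact ⟨u, hu, w, hw, hwu.symm, huw, hus, hws⟩

end

/-- Every chordal graph with at least one vertex has a simplicial vertex,
i.e. a vertex whose neighborhood is a clique. -/
theorem chordal_exists_simplicial {V : Type*} [Fintype V] [Nonempty V]
    (G : SimpleGraph V) (hchordal : IsChordal G) :
    ∃ v : V, G.IsClique (G.neighborSet v) := by
  obtain ⟨v⟩ := ‹Nonempty V›
  rcases hchordal.isClique_or_exists_isSimplicialIn Set.univ with h | ⟨u, -, -, -, -, -, hu, -⟩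
  · exact ⟨v, h.subset (Set.subset_univ _)⟩
  · exact ⟨u, by simpa [IsSimplicialIn] using hu⟩
end

section
/- If a block graph G has a simplicial vertex v of the graph H induced on the cut vertices of G, and v lies in two distinct maximal cliques X₁ and X₂ of G, then X₁ \ {v} and X₂ \ {v} lie in distinct connected components of G − v; hence no cut vertex of G other than v lying in X₁ can be adjacent in G to a cut vertex lying in X₂ \ {v}. -/
/-- `v` is a cut vertex: its removal disconnects two vertices that were
in the same connected component. -/
def IsCutVertex {V : Type*} (G : SimpleGraph V) (v : V) : Prop :=
  ∃ (a b : V) (ha : a ≠ v) (hb : b ≠ v), G.Reachable a b ∧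
    ¬ (G.induce ({v}ᶜ : Set V)).Reachable ⟨a, ha⟩ ⟨b, hb⟩

open SimpleGraph

private lemma diamond_of {V : Type*} {G : SimpleGraph V} (hdf : IsEmpty (diamondGraph ↪g G))
    {p q r s : V} (hne : p ≠ q) (hpq : ¬ G.Adj p q) (hpr : G.Adj p r) (hps : G.Adj p s)
    (hqr : G.Adj q r) (hqs : G.Adj q s) (hrs : G.Adj r s) : False := by
  have hprne := hpr.ne
  have hpsne := hps.ne
  have hqrne := hqr.ne
  have hqsne := hqs.ne
  have hrsne := hrs.ne
  apply hdf.false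
  refine ⟨⟨![p, q, r, s], ?_⟩, ?_⟩
  · intro a b hab
    fin_cases a <;> fin_cases b <;> simp_all
  · intro a b
    fin_cases a <;> fin_cases b <;>
      simp_all [diamondGraph, Sym2.eq, Sym2.rel_iff', G.adj_comm, DFunLike.coe]

private lemma shortcut {V : Type*} {G : SimpleGraph V} {x y : V} :
    ∀ {a b : V} (Q : G.Walk a b), x ∈ Q.support → y ∈ Q.support →
    G.Adj x y → s(x, y) ∉ Q.edges →
    ∃ W : G.Walk a b, W.length < Q.length ∧ ∀ z ∈ W.support, z ∈ Q.support := by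
  intro a b Q
  classical
  induction Q with
  | nil =>
    intro hx hy hadj _
    simp only [Walk.support_nil, List.mem_singleton] at hx hy
    exact absurd hadj (by rw [hx, hy]; exact G.irrefl)
  | @cons a c b h q ih =>
    intro hx hy hadj he
    simp only [Walk.support_cons, List.mem_cons] at hx hy
    have he' : s(x, y) ∉ q.edges := fun hh => he (by simp [hh])
    by_cases hxa : x = a
    · subst hxa
      have hy' : y ∈ q.support := hy.resolve_left (fun h' => hadj.ne h'.symm)
      have hyc : y ≠ c := by
        rintro rfl
        exact he (by simp)
      have hlt : (q.dropUntil y hy').length < q.length := by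
        have hspec := congrArg Walk.length (q.take_spec hy')
        rw [Walk.length_append] at hspec
        have h1 : 1 ≤ (q.takeUntil y hy').length := by
          by_contra hcon
          push_neg at hcon
          exact hyc (Walk.eq_of_length_eq_zero (p := q.takeUntil y hy') (by omega)).symm
        omega
      refine ⟨Walk.cons hadj (q.dropUntil y hy'), by simp [hlt, Nat.succ_lt_succ], ?_⟩
      intro z hz
      simp only [Walk.support_cons, List.mem_cons] at hz ⊢
      exact hz.imp id fun hh => q.support_dropUntil_subset hy' hh
    · have hx' : x ∈ q.support := hx.resolve_left hxa
      by_cases hya : y = a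
      · subst hya
        have hxc : x ≠ c := by
          rintro rfl
          exact he (by simp [Sym2.eq_swap])
        have hlt : (q.dropUntil x hx').length < q.length := by
          have hspec := congrArg Walk.length (q.take_spec hx')
          rw [Walk.length_append] at hspec
          have h1 : 1 ≤ (q.takeUntil x hx').length := by
            by_contra hcon
            push_neg at hcon
            exact hxc (Walk.eq_of_length_eq_zero (p := q.takeUntil x hx') (by omega)).symm
          omega
        refine ⟨Walk.cons hadj.symm (q.dropUntil x hx'), by simp [hlt, Nat.succ_lt_succ], ?_⟩
        intro z hz
        simp only [Walk.support_cons, List.mem_cons] at hz ⊢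
        exact hz.imp id fun hh => q.support_dropUntil_subset hx' hh
      · have hy' : y ∈ q.support := hy.resolve_left hya
        obtain ⟨W, hW1, hW2⟩ := ih hx' hy' hadj he'
        refine ⟨Walk.cons h W, by simpa using Nat.succ_lt_succ hW1, ?_⟩
        intro z hz
        simp only [Walk.support_cons, List.mem_cons] at hz ⊢
        exact hz.imp id fun hh => hW2 z hh

private lemma no_walk {V : Type*} {G : SimpleGraph V} (hchordal : IsChordal G)
    (hdf : IsEmpty (diamondGraph ↪g G)) (v : V) :
    ∀ (n : ℕ) (a b : V), G.Adj v a → G.Adj v b → a ≠ b → ¬ G.Adj a b →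
      ∀ (P : G.Walk a b), v ∉ P.support → P.length = n → False := by
  intro n
  induction n using Nat.strong_induction_on with
  | _ n IH =>
  intro a b hva hvb hab hnadj P hvP hlen
  classical
  have hQpath : P.bypass.IsPath := P.bypass_isPath
  set Q := P.bypass with hQdef
  have hQsupp : ∀ z ∈ Q.support, z ∈ P.support := fun z hz => P.support_bypass_subset hz
  have hvQ : v ∉ Q.support := fun h => hvP (hQsupp _ h)
  rcases lt_or_eq_of_le P.length_bypass_le with hlt | heq
  · exact IH Q.length (hlen ▸ hlt) a b hva hvb hab hnadj Q hvQ rfl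
  have hQlen : Q.length = n := heq.trans hlen
  have h2 : 2 ≤ n := by
    rcases n with _ | _ | n
    · exact absurd (Walk.eq_of_length_eq_zero (p := Q) hQlen) hab
    · exact absurd (Walk.adj_of_length_eq_one (p := Q) hQlen) hnadj
    · omega
  -- build the cycle  v - a - ... - b - v
  have hbv : b ≠ v := hvb.ne'
  have hav : a ≠ v := hva.ne'
  have hconcat_path : (Q.concat hvb.symm).IsPath := by
    rw [Walk.isPath_def, Walk.support_concat, List.nodup_append]
    exact ⟨hQpath.support_nodup, List.nodup_singleton v,
      by simpa [List.disjoint_singleton] using fun x hx (h : x = v) => hvQ (h ▸ hx)⟩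
  have hva_not : s(v, a) ∉ (Q.concat hvb.symm).edges := by
    rw [Walk.edges_concat, List.concat_eq_append, List.mem_append]
    rintro (h | h)
    · exact hvQ (Walk.fst_mem_support_of_mem_edges Q h)
    · simp only [List.mem_singleton, Sym2.eq, Sym2.rel_iff', Prod.mk.injEq, Prod.swap_prod_mk] at h
      rcases h with ⟨h1, _⟩ | ⟨_, h2⟩
      · exact hbv h1.symm
      · exact hab h2
  set C : G.Walk v v := Walk.cons hva (Q.concat hvb.symm) with hCdef
  have hCcyc : C.IsCycle := (Walk.cons_isCycle_iff _ hva).mpr ⟨hconcat_path, hva_not⟩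
  have hClen : 4 ≤ C.length := by
    rw [hCdef, Walk.length_cons, Walk.length_concat]
    omega
  obtain ⟨x, y, hx, hy, hadj, he⟩ := hchordal v C hCcyc hClen
  have hsupp : ∀ z, z ∈ C.support → z = v ∨ z ∈ Q.support := by
    intro z hz
    rw [hCdef, Walk.support_cons, Walk.support_concat] at hz
    simp only [List.mem_cons, List.mem_append, List.mem_singleton] at hz
    tauto
  have hedges : ∀ e, e ∈ C.edges ↔ e = s(v, a) ∨ e ∈ Q.edges ∨ e = s(b, v) := by
    intro e
    rw [hCdef, Walk.edges_cons, Walk.edges_concat, List.concat_eq_append]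
    simp [or_assoc]
  -- key: a chord from v to an interior vertex of Q is impossible
  have key : ∀ y' : V, y' ∈ Q.support → G.Adj v y' → y' ≠ a → y' ≠ b → False := by
    intro w hw hvw hwa hwb
    have hspec := congrArg Walk.length (Q.take_spec hw)
    rw [Walk.length_append] at hspec
    have hQ1 : 1 ≤ (Q.takeUntil w hw).length := by
      by_contra hcon
      push_neg at hcon
      exact hwa (Walk.eq_of_length_eq_zero (p := Q.takeUntil w hw) (by omega)).symm
    have hQ2 : 1 ≤ (Q.dropUntil w hw).length := by
      by_contra hcon
      push_neg at hcon
      exact hwb (Walk.eq_of_length_eq_zero (p := Q.dropUntil w hw) (by omega))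
    have hv1 : v ∉ (Q.takeUntil w hw).support :=
      fun h => hvQ (Q.support_takeUntil_subset hw h)
    have hv2 : v ∉ (Q.dropUntil w hw).support :=
      fun h => hvQ (Q.support_dropUntil_subset hw h)
    by_cases haw : G.Adj a w
    · by_cases hwb' : G.Adj w b
      · exact diamond_of hdf hab hnadj haw hva.symm hwb'.symm hvb.symm hvw.symm
      · exact IH (Q.dropUntil w hw).length (by omega) w b hvw hvb hwb hwb'
          (Q.dropUntil w hw) hv2 rfl
    · exact IH (Q.takeUntil w hw).length (by omega) a w hva hvw
        (fun h => hwa (h.symm)) haw (Q.takeUntil w hw) hv1 rfl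
  rcases hsupp x hx with rfl | hxQ
  · -- x = v
    have hyQ : y ∈ Q.support := (hsupp y hy).resolve_left (fun h => hadj.ne h.symm)
    have hya : y ≠ a := by
      rintro rfl
      exact he ((hedges s(x, y)).mpr (Or.inl rfl))
    have hyb : y ≠ b := by
      rintro rfl
      exact he ((hedges s(x, y)).mpr (Or.inr (Or.inr (Sym2.eq_swap))))
    exact key y hyQ hadj hya hyb
  rcases hsupp y hy with rfl | hyQ
  · -- y = v
    have hxa : x ≠ a := by
      rintro rfl
      exact he ((hedges s(x, y)).mpr (Or.inl (Sym2.eq_swap)))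
    have hxb : x ≠ b := by
      rintro rfl
      exact he ((hedges s(x, y)).mpr (Or.inr (Or.inr rfl)))
    exact key x hxQ hadj.symm hxa hxb
  · -- both in Q : shortcut
    have heQ : s(x, y) ∉ Q.edges := fun h => he ((hedges _).mpr (Or.inr (Or.inl h)))
    obtain ⟨W, hW1, hW2⟩ := shortcut Q hxQ hyQ hadj heQ
    exact IH W.length (by omega) a b hva hvb hab hnadj W
      (fun h => hvQ (hW2 v h)) rfl

private lemma cliques_eq_of_two {V : Type*} {G : SimpleGraph V} (hdf : IsEmpty (diamondGraph ↪g G))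
    {X₁ X₂ : Set V}
    (hX₁ : G.IsClique X₁) (hX₁max : ∀ Y : Set V, G.IsClique Y → X₁ ⊆ Y → Y = X₁)
    (hX₂ : G.IsClique X₂) (hX₂max : ∀ Y : Set V, G.IsClique Y → X₂ ⊆ Y → Y = X₂)
    {v w : V} (hvw : v ≠ w) (hv1 : v ∈ X₁) (hv2 : v ∈ X₂) (hw1 : w ∈ X₁) (hw2 : w ∈ X₂) :
    X₁ = X₂ := by
  have hkey : ∀ x ∈ X₁, ∀ y ∈ X₂, x ≠ y → G.Adj x y := by
    intro x hx y hy hxy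
    by_cases hx2 : x ∈ X₂
    · exact hX₂ hx2 hy hxy
    by_cases hy1 : y ∈ X₁
    · exact hX₁ hx hy1 hxy
    have hxv : x ≠ v := fun h => hx2 (h ▸ hv2)
    have hxw : x ≠ w := fun h => hx2 (h ▸ hw2)
    have hyv : y ≠ v := fun h => hy1 (h ▸ hv1)
    have hyw : y ≠ w := fun h => hy1 (h ▸ hw1)
    by_contra hnadj
    exact diamond_of hdf hxy hnadj (hX₁ hx hv1 hxv) (hX₁ hx hw1 hxw)
      (hX₂ hy hv2 hyv) (hX₂ hy hw2 hyw) (hX₁ hv1 hw1 hvw)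
  have hclique : G.IsClique (X₁ ∪ X₂) := by
    intro x hx y hy hxy
    rcases hx with hx | hx <;> rcases hy with hy | hy
    · exact hX₁ hx hy hxy
    · exact hkey x hx y hy hxy
    · exact (hkey y hy x hx hxy.symm).symm
    · exact hX₂ hx hy hxy
  have h1 := hX₁max _ hclique Set.subset_union_left
  have h2 := hX₂max _ hclique Set.subset_union_right
  exact h1.symm.trans h2


private lemma cross_sep {V : Type*} {G : SimpleGraph V} (hdf : IsEmpty (diamondGraph ↪g G))
    {X₁ X₂ : Set V} (hX : X₁ ≠ X₂)
    (hX₁ : G.IsClique X₁) (hX₁max : ∀ Y : Set V, G.IsClique Y → X₁ ⊆ Y → Y = X₁)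
    (hX₂ : G.IsClique X₂) (hX₂max : ∀ Y : Set V, G.IsClique Y → X₂ ⊆ Y → Y = X₂)
    {v a b : V} (hv₁ : v ∈ X₁) (hv₂ : v ∈ X₂) (ha : a ∈ X₁) (hb : b ∈ X₂)
    (hav : a ≠ v) (hbv : b ≠ v) : a ≠ b ∧ ¬ G.Adj a b := by
  constructor
  · rintro rfl
    exact hX (cliques_eq_of_two hdf hX₁ hX₁max hX₂ hX₂max hav.symm hv₁ hv₂ ha hb)
  · intro hab
    have hvb : G.Adj v b := hX₂ hv₂ hb (fun h => hbv h.symm)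
    have hva : G.Adj v a := hX₁ hv₁ ha (fun h => hav h.symm)
    have hclique : G.IsClique (X₁ ∪ {b}) := by
      have hstep : ∀ x ∈ X₁, x ≠ b → G.Adj x b := by
        intro x hx hxb
        by_cases hxv : x = v
        · exact hxv ▸ hvb
        by_cases hxa : x = a
        · exact hxa ▸ hab
        by_contra hnadj
        exact diamond_of hdf hxb hnadj (hX₁ hx ha hxa) (hX₁ hx hv₁ hxv)
          hab.symm hvb.symm hva.symm
      intro x hx y hy hxy
      rcases hx with hx | hx <;> rcases hy with hy | hy
      · exact hX₁ hx hy hxy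
      · have := Set.mem_singleton_iff.mp hy; subst this; exact hstep x hx hxy
      · have := Set.mem_singleton_iff.mp hx; subst this; exact (hstep y hy hxy.symm).symm
      · exact absurd (Set.mem_singleton_iff.mp hx ▸ Set.mem_singleton_iff.mp hy ▸ rfl) hxy
    have hb1 : b ∈ X₁ := by
      have := hX₁max _ hclique Set.subset_union_left
      rw [← this]
      exact Or.inr rfl
    exact hX (cliques_eq_of_two hdf hX₁ hX₁max hX₂ hX₂max hbv.symm hv₁ hv₂ hb1 hb)

/-- If `v` is a simplicial vertex of the subgraph of a block graph `G` induced
on its cut vertices, and `v` lies in two distinct maximal cliques `X₁`, `X₂` of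
`G`, then `X₁ \ {v}` and `X₂ \ {v}` lie in distinct connected components of
`G - v`; hence no cut vertex of `G` other than `v` lying in `X₁` is adjacent to
a cut vertex lying in `X₂ \ {v}`. -/
theorem maximal_cliques_separated_at_cutVertex {V : Type*} [Fintype V]
    (G : SimpleGraph V)
    (hchordal : IsChordal G) (hdf : IsEmpty (diamondGraph ↪g G))
    (v : V) (hvc : IsCutVertex G v)
    (hsimp : (G.induce {x : V | IsCutVertex G x}).IsClique
      ((G.induce {x : V | IsCutVertex G x}).neighborSet ⟨v, hvc⟩))
    (X₁ X₂ : Set V) (hX : X₁ ≠ X₂)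
    (hX₁ : G.IsClique X₁) (hX₁max : ∀ Y : Set V, G.IsClique Y → X₁ ⊆ Y → Y = X₁)
    (hX₂ : G.IsClique X₂) (hX₂max : ∀ Y : Set V, G.IsClique Y → X₂ ⊆ Y → Y = X₂)
    (hv₁ : v ∈ X₁) (hv₂ : v ∈ X₂) :
    (∀ (a b : V) (ha : a ∈ X₁ \ {v}) (hb : b ∈ X₂ \ {v}),
        ¬ (G.induce ({v}ᶜ : Set V)).Reachable ⟨a, ha.2⟩ ⟨b, hb.2⟩) ∧
      (∀ x ∈ X₁, x ≠ v → IsCutVertex G x →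
        ∀ y ∈ X₂ \ {v}, IsCutVertex G y → ¬ G.Adj x y) := by
  classical
  have part1 : ∀ (a b : V) (ha : a ∈ X₁ \ {v}) (hb : b ∈ X₂ \ {v}),
      ¬ (G.induce ({v}ᶜ : Set V)).Reachable ⟨a, ha.2⟩ ⟨b, hb.2⟩ := by
    intro a b ha hb hre
    have hav : a ≠ v := ha.2
    have hbv : b ≠ v := hb.2
    obtain ⟨hne, hnadj⟩ := cross_sep hdf hX hX₁ hX₁max hX₂ hX₂max hv₁ hv₂ ha.1 hb.1 hav hbv
    have hva : G.Adj v a := hX₁ hv₁ ha.1 (Ne.symm hav)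
    have hvb : G.Adj v b := hX₂ hv₂ hb.1 (Ne.symm hbv)
    obtain ⟨w⟩ := hre
    let P : G.Walk a b := w.map (SimpleGraph.Embedding.induce ({v}ᶜ : Set V)).toHom
    have hvP : v ∉ P.support := by
      intro hmem
      rw [show P.support = _ from SimpleGraph.Walk.support_map _ _, List.mem_map] at hmem
      obtain ⟨z, _, hz⟩ := hmem
      exact z.2 hz
    exact no_walk hchordal hdf v P.length a b hva hvb hne hnadj P hvP rfl
  refine ⟨part1, ?_⟩
  intro x hx hxv _ y hy _ hadj
  have hyv : y ≠ v := hy.2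
  have hindadj : (G.induce ({v}ᶜ : Set V)).Adj ⟨x, hxv⟩ ⟨y, hyv⟩ := by
    simpa using hadj
  exact part1 x y ⟨hx, hxv⟩ hy hindadj.reachable
end

section
/- Suppose each pair of distinct elements of a finite set W of size n ≥ R(m,m,m) is assigned an ordered relation: for each pair {x,y} there exist k ∈ {1,2,3} such that x →_k y or y →_k x, and each relation →_k satisfies: if x →_k y, y →_k z, and (x →_k z or z →_k x), then x →_k z. Then there exists a sequence x_1, ..., x_m of distinct elements of W and a single k such that x_i →_k x_j for all i < j. -/
/-!
Colour each pair `{x, y}` of `W` by some `k` with `x →ₖ y` or `y →ₖ x`. Ramsey's theorem gives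
`m` elements on which one relation `→ₖ` is total; there the conditional transitivity of `→ₖ` is
plain transitivity, so `→ₖ` is a tournament without cycles on them. Repeatedly removing its
source lists them in the required order.
-/

/-- `r` has the 3-color Ramsey property for `m`. -/
def RamseyProp (m r : ℕ) : Prop :=
  ∀ c : Fin r → Fin r → Fin 3, (∀ x y, c x y = c y x) →
    ∃ (S : Finset (Fin r)) (k : Fin 3), S.card = m ∧
      ∀ x ∈ S, ∀ y ∈ S, x ≠ y → c x y = k

theorem RamseyProp.exists_monochromatic {α : Type*} {m r : ℕ} (hr : RamseyProp m r)
    (W : Finset α) (hW : r ≤ W.card) (c : α → α → Fin 3) (hc : ∀ x y, c x y = c y x) :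
    ∃ S ⊆ W, S.card = m ∧ ∃ k, (S : Set α).Pairwise fun x y => c x y = k := by
  let f : Fin r ↪ α :=
    (Fin.castLEEmb hW).trans (W.equivFin.symm.toEmbedding.trans (Function.Embedding.subtype _))
  obtain ⟨S, k, hS, hSk⟩ := hr (fun i j => c (f i) (f j)) fun i j => hc _ _
  refine ⟨S.map f, fun x hx => ?_, by rw [Finset.card_map, hS], k, ?_⟩
  · obtain ⟨i, -, rfl⟩ := Finset.mem_map.1 hx
    exact (W.equivFin.symm _).2
  · simp only [Finset.coe_map, Set.Pairwise, Set.mem_image, Finset.mem_coe]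
    rintro _ ⟨i, hi, rfl⟩ _ ⟨j, hj, rfl⟩ hij
    exact hSk i hi j hj (ne_of_apply_ne f hij)

namespace Finset

variable {α : Type*} {r : α → α → Prop}

theorem exists_forall_rel_of_total (S : Finset α) (hS : S.Nonempty)
    (htot : (S : Set α).Pairwise fun x y => r x y ∨ r y x)
    (htrans : ∀ x ∈ S, ∀ y ∈ S, ∀ z ∈ S, x ≠ z → r x y → r y z → r x z) :
    ∃ x ∈ S, ∀ y ∈ S, y ≠ x → r x y := by
  classical
  induction S using Finset.induction_on with
  | empty => exact absurd hS Finset.not_nonempty_empty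
  | @insert a s ha ih =>
    rcases s.eq_empty_or_nonempty with rfl | hs
    · exact ⟨a, by simp⟩
    obtain ⟨x, hxs, hx⟩ := ih hs (htot.mono (by simp))
      fun u hu v hv w hw => htrans u (mem_insert_of_mem hu) v (mem_insert_of_mem hv) w
        (mem_insert_of_mem hw)
    have hne : a ≠ x := ne_of_mem_of_not_mem hxs ha |>.symm
    rcases htot (by simp) (by simp [hxs]) hne with hax | hxa
    · refine ⟨a, mem_insert_self a s, fun y hy hya => ?_⟩
      obtain rfl | hys := mem_insert.1 hy
      · exact absurd rfl hya
      obtain rfl | hyx := eq_or_ne y x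
      · exact hax
      exact htrans a (mem_insert_self a s) x (mem_insert_of_mem hxs) y hy
        (ne_of_mem_of_not_mem hys ha).symm hax (hx y hys hyx)
    · refine ⟨x, mem_insert_of_mem hxs, fun y hy hyx => ?_⟩
      obtain rfl | hys := mem_insert.1 hy
      · exact hxa
      exact hx y hys hyx

theorem exists_list_pairwise_of_total (S : Finset α)
    (htot : (S : Set α).Pairwise fun x y => r x y ∨ r y x)
    (htrans : ∀ x ∈ S, ∀ y ∈ S, ∀ z ∈ S, x ≠ z → r x y → r y z → r x z) :
    ∃ l : List α, (l : Multiset α) = S.val ∧ l.Pairwise r := by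
  classical
  induction hn : S.card generalizing S with
  | zero => exact ⟨[], by simp_all⟩
  | succ n ih =>
    obtain ⟨x, hxS, hx⟩ := S.exists_forall_rel_of_total (card_pos.1 (by omega)) htot htrans
    obtain ⟨l, hl, hpw⟩ := ih (S.erase x) (htot.mono (by simp))
      (fun u hu v hv w hw => htrans u (mem_of_mem_erase hu) v (mem_of_mem_erase hv) w
        (mem_of_mem_erase hw))
      (by rw [card_erase_of_mem hxS, hn]; rfl)
    have hmem : ∀ y ∈ l, y ≠ x ∧ y ∈ S := fun y hy =>
      mem_erase.1 (mem_def.2 (hl ▸ Multiset.mem_coe.2 hy))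
    refine ⟨x :: l, ?_, List.pairwise_cons.2 ⟨fun y hy => hx y (hmem y hy).2 (hmem y hy).1, hpw⟩⟩
    rw [← Multiset.cons_coe, hl, erase_val, Multiset.cons_erase hxS]

end Finset

theorem exists_tail_biting_sequence_general {α : Type*}
    (m R : ℕ) (hR : IsLeast {r : ℕ | RamseyProp m r} R)
    (W : Finset α) (hW : R ≤ W.card)
    (rel : Fin 3 → α → α → Prop)
    (htot : ∀ x ∈ W, ∀ y ∈ W, x ≠ y → ∃ k : Fin 3, rel k x y ∨ rel k y x)
    (htrans : ∀ k : Fin 3, ∀ x ∈ W, ∀ y ∈ W, ∀ z ∈ W,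
      rel k x y → rel k y z → (rel k x z ∨ rel k z x) → rel k x z) :
    ∃ (l : List α) (k : Fin 3), l.Nodup ∧ l.length = m ∧
      (∀ x ∈ l, x ∈ W) ∧ l.Pairwise (rel k) := by
  -- The colour is symmetric because the predicate it is chosen from is.
  let c : α → α → Fin 3 := fun x y => Classical.epsilon fun k => rel k x y ∨ rel k y x
  have hc_symm : ∀ x y, c x y = c y x := fun x y => by simp only [c, or_comm]
  obtain ⟨S, hSW, hS, k, hSk⟩ := hR.1.exists_monochromatic W hW c hc_symm
  have htotS : (S : Set α).Pairwise fun x y => rel k x y ∨ rel k y x := fun x hx y hy hxy =>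
    hSk hx hy hxy ▸ Classical.epsilon_spec (htot x (hSW hx) y (hSW hy) hxy)
  obtain ⟨l, hl, hpw⟩ := S.exists_list_pairwise_of_total htotS
    fun x hx y hy z hz hxz hxy hyz =>
      htrans k x (hSW hx) y (hSW hy) z (hSW hz) hxy hyz (htotS hx hz hxz)
  refine ⟨l, k, Multiset.coe_nodup.1 (hl ▸ S.nodup), ?_, fun x hx => hSW ?_, hpw⟩
  · rw [← Multiset.coe_card, hl, ← hS, Finset.card_val]
  · exact Finset.mem_def.2 (hl ▸ Multiset.mem_coe.2 hx)

/-- Lemma 4.5 (abstract form): if every pair of distinct elements of a finite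
set `W` with `|W| ≥ R(m,m,m)` is related in some direction by one of three
weakly transitive relations, then there is a sequence of `m` distinct elements
of `W` linearly ordered by a single relation. -/
theorem exists_tail_biting_sequence {α : Type*} [DecidableEq α]
    (m R : ℕ) (hR : IsLeast {r : ℕ | RamseyProp m r} R)
    (W : Finset α) (hW : R ≤ W.card)
    (rel : Fin 3 → α → α → Prop)
    (htot : ∀ x ∈ W, ∀ y ∈ W, x ≠ y → ∃ k : Fin 3, rel k x y ∨ rel k y x)
    (htrans : ∀ k : Fin 3, ∀ x ∈ W, ∀ y ∈ W, ∀ z ∈ W,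
      rel k x y → rel k y z → (rel k x z ∨ rel k z x) → rel k x z) :
    ∃ (l : List α) (k : Fin 3), l.Nodup ∧ l.length = m ∧
      (∀ x ∈ l, x ∈ W) ∧ l.Pairwise (rel k) :=
  exists_tail_biting_sequence_general m R hR W hW rel htot htrans
end

section
/- Let T₁ and T₂ be two homothetic closed triangles in a plane (T₂ = λT₁ + t for some λ > 0 and translation t), with open interiors A₁ and A₂. If A₁ ∩ A₂ ≠ ∅, A₁ \ A₂ ≠ ∅, and A₂ \ A₁ ≠ ∅ (i.e., they are crossing), then some vertex of T₁ lies in T₂ or some vertex of T₂ lies in T₁. -/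
/-! In barycentric coordinates of the first triangle, the dilation `x ↦ lam • x + t` acts by
`coord i (lam • x + t) = lam * coord i x + c i` for constants `c i`. A common point of the two
triangles forces `-lam ≤ c i ≤ 1`. Among three reals, two have the same sign: if two of the `c i`
are `≤ 0`, the remaining vertex of the first triangle lies in the second, and if two are `≥ 0`,
the image of the remaining vertex lies in the first. -/

open Set

theorem AffineMap.apply_smul_add {k V W : Type*} [CommRing k] [AddCommGroup V] [Module k V]
    [AddCommGroup W] [Module k W] (g : V →ᵃ[k] W) (lam : k) (x t : V) :
    g (lam • x + t) = lam • g x + (g t - lam • g 0) := by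
  rw [AffineMap.decomp g]
  simp only [Pi.add_apply, map_add, map_smul, map_zero]
  module

namespace AffineBasis

variable {ι V : Type*} [AddCommGroup V] [Module ℝ V] (b : AffineBasis ι ℝ V) (lam : ℝ) (t : V)

theorem coord_le_one_of_forall_nonneg [Fintype ι] {x : V} (hx : ∀ i, 0 ≤ b.coord i x) (i : ι) :
    b.coord i x ≤ 1 :=
  b.sum_coord_apply_eq_one x ▸ Finset.single_le_sum (fun j _ => hx j) (Finset.mem_univ i)

noncomputable def coordOffset (i : ι) : ℝ := b.coord i t - lam * b.coord i 0

theorem coord_smul_add (x : V) (i : ι) :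
    b.coord i (lam • x + t) = lam * b.coord i x + b.coordOffset lam t i :=
  (b.coord i).apply_smul_add lam x t

variable {b lam t}

theorem coordOffset_mem_Icc [Fintype ι] (hlam : 0 ≤ lam) {x : V} (hx : ∀ i, 0 ≤ b.coord i x)
    (hx' : ∀ i, 0 ≤ b.coord i (lam • x + t)) (i : ι) : b.coordOffset lam t i ∈ Icc (-lam) 1 := by
  have h := b.coord_smul_add lam t x i
  constructor
  · have := mul_le_of_le_one_right hlam (b.coord_le_one_of_forall_nonneg hx i)
    linarith [hx' i]
  · have := mul_nonneg hlam (hx i)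
    linarith [b.coord_le_one_of_forall_nonneg hx' i]

theorem mem_image_smul_add_of_coordOffset (hlam : 0 < lam) {j : ι}
    (hj : b.coordOffset lam t j ≤ 1) (hne : ∀ i ≠ j, b.coordOffset lam t i ≤ 0) :
    b j ∈ (fun x => lam • x + t) '' {x | ∀ i, 0 ≤ b.coord i x} := by
  refine ⟨lam⁻¹ • (b j - t), fun i => ?_, by simp [smul_smul, hlam.ne']⟩
  have h := b.coord_smul_add lam t (lam⁻¹ • (b j - t)) i
  rw [smul_smul, mul_inv_cancel₀ hlam.ne', one_smul, sub_add_cancel] at h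
  refine (mul_nonneg_iff_of_pos_left hlam).mp ?_
  rcases eq_or_ne i j with rfl | hij
  · rw [b.coord_apply_eq] at h; linarith
  · rw [b.coord_apply_ne hij] at h; linarith [hne i hij]

theorem smul_add_mem_of_coordOffset {j : ι}
    (hj : -lam ≤ b.coordOffset lam t j) (hne : ∀ i ≠ j, 0 ≤ b.coordOffset lam t i) :
    lam • b j + t ∈ {x | ∀ i, 0 ≤ b.coord i x} := by
  intro i
  rw [b.coord_smul_add]
  rcases eq_or_ne i j with rfl | hij
  · rw [b.coord_apply_eq]; linarith
  · rw [b.coord_apply_ne hij]; linarith [hne i hij]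

end AffineBasis

theorem exists_forall_ne_nonpos_or_forall_ne_nonneg (c : Fin 3 → ℝ) :
    ∃ j, (∀ i ≠ j, c i ≤ 0) ∨ (∀ i ≠ j, 0 ≤ c i) := by
  simp only [ne_eq, Fin.forall_fin_succ, Fin.isValue, Fin.succ_zero_eq_one, Fin.succ_one_eq_two,
    IsEmpty.forall_iff, and_true, Fin.exists_fin_succ, not_true_eq_false, one_ne_zero,
    not_false_eq_true, forall_const, Fin.reduceEq, true_and, zero_ne_one, IsEmpty.exists_iff,
    or_false]
  rcases le_total (c 0) 0 with h0 | h0 <;> rcases le_total (c 1) 0 with h1 | h1 <;>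
    rcases le_total (c 2) 0 with h2 | h2 <;> tauto

theorem AffineBasis.exists_vertex_mem_of_inter_smul_add_nonempty {V : Type*} [AddCommGroup V]
    [Module ℝ V] (b : AffineBasis (Fin 3) ℝ V) {lam : ℝ} (hlam : 0 < lam) (t : V)
    (h : (convexHull ℝ (range b) ∩ (fun x => lam • x + t) '' convexHull ℝ (range b)).Nonempty) :
    (∃ j, b j ∈ (fun x => lam • x + t) '' convexHull ℝ (range b)) ∨
      ∃ j, lam • b j + t ∈ convexHull ℝ (range b) := by
  rw [b.convexHull_eq_nonneg_coord] at h ⊢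
  obtain ⟨_, hx', x, hx, rfl⟩ := h
  have hoffset := b.coordOffset_mem_Icc hlam.le hx hx'
  obtain ⟨j, hj | hj⟩ := exists_forall_ne_nonpos_or_forall_ne_nonneg (b.coordOffset lam t)
  · exact .inl ⟨j, b.mem_image_smul_add_of_coordOffset hlam (hoffset j).2 hj⟩
  · exact .inr ⟨j, b.smul_add_mem_of_coordOffset (hoffset j).1 hj⟩

theorem crossing_homothetic_triangles_vertex_mem_general
    (a b c : EuclideanSpace ℝ (Fin 2)) (haff : AffineIndependent ℝ ![a, b, c])
    (lam : ℝ) (hlam : 0 < lam) (t : EuclideanSpace ℝ (Fin 2))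
    (T₁ T₂ : Set (EuclideanSpace ℝ (Fin 2)))
    (hT₁ : T₁ = convexHull ℝ {a, b, c})
    (hT₂ : T₂ = convexHull ℝ {lam • a + t, lam • b + t, lam • c + t})
    (hcross₁ : (interior T₁ ∩ interior T₂).Nonempty) :
    (a ∈ T₂ ∨ b ∈ T₂ ∨ c ∈ T₂) ∨
      (lam • a + t ∈ T₁ ∨ lam • b + t ∈ T₁ ∨ lam • c + t ∈ T₁) := by
  let u : AffineBasis (Fin 3) ℝ (EuclideanSpace ℝ (Fin 2)) :=
    ⟨![a, b, c], haff, haff.affineSpan_eq_top_iff_card_eq_finrank_add_one.mpr (by simp)⟩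
  let f : EuclideanSpace ℝ (Fin 2) →ᵃ[ℝ] EuclideanSpace ℝ (Fin 2) :=
    (lam • LinearMap.id).toAffineMap + AffineMap.const ℝ _ t
  have hu : range u = {a, b, c} := by
    rw [show ⇑u = ![a, b, c] from rfl, Matrix.range_cons, Matrix.range_cons_cons_empty,
      singleton_union]
  have hT₁' : T₁ = convexHull ℝ (range u) := by rw [hT₁, hu]
  have hT₂' : T₂ = (fun x => lam • x + t) '' convexHull ℝ (range u) := by
    rw [hT₂, show (fun x => lam • x + t) = f from rfl, f.image_convexHull, hu]
    simp only [image_insert_eq, image_singleton]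
    rfl
  have hcross : (T₁ ∩ T₂).Nonempty :=
    hcross₁.mono (inter_subset_inter interior_subset interior_subset)
  have hvertex (P : EuclideanSpace ℝ (Fin 2) → Prop) : (∃ j, P (u j)) → P a ∨ P b ∨ P c := by
    rintro ⟨j, hj⟩
    fin_cases j
    exacts [.inl hj, .inr (.inl hj), .inr (.inr hj)]
  rw [hT₁', hT₂'] at hcross ⊢
  rcases u.exists_vertex_mem_of_inter_smul_add_nonempty hlam t hcross with h | h
  · exact .inl (hvertex _ h)
  · exact .inr (hvertex (fun v => lam • v + t ∈ _) h)

/-- Lemma 2.4: if two homothetic closed triangles in the plane are crossing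
(their open interiors intersect and neither interior contains the other), then
a vertex of one triangle lies in the other triangle. -/
theorem crossing_homothetic_triangles_vertex_mem
    (a b c : EuclideanSpace ℝ (Fin 2)) (haff : AffineIndependent ℝ ![a, b, c])
    (lam : ℝ) (hlam : 0 < lam) (t : EuclideanSpace ℝ (Fin 2))
    (T₁ T₂ : Set (EuclideanSpace ℝ (Fin 2)))
    (hT₁ : T₁ = convexHull ℝ {a, b, c})
    (hT₂ : T₂ = convexHull ℝ {lam • a + t, lam • b + t, lam • c + t})
    (hcross₁ : (interior T₁ ∩ interior T₂).Nonempty)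
    (hcross₂ : (interior T₁ \ interior T₂).Nonempty)
    (hcross₃ : (interior T₂ \ interior T₁).Nonempty) :
    (a ∈ T₂ ∨ b ∈ T₂ ∨ c ∈ T₂) ∨
      (lam • a + t ∈ T₁ ∨ lam • b + t ∈ T₁ ∨ lam • c + t ∈ T₁) :=
  crossing_homothetic_triangles_vertex_mem_general a b c haff lam hlam t T₁ T₂ hT₁ hT₂ hcross₁
end
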